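/- The function x ↦ c_x defined by c_x = ∫₀¹ h(1/(1 + e^{λ(x)/y})) dy, where λ(x) > 0 is the unique solution of ∫₀¹ 1/(y(1 + e^{λ/y})) dy = x, is strictly increasing on (0,∞), satisfies c_x → 0 as x → 0⁺, and c_x → 1 as x → ∞. -/

import Mathlib

open Filter

/-- Binary entropy function (base 2). -/
noncomputable def binEnt (p : ℝ) : ℝ :=
  -p * Real.logb 2 p - (1 - p) * Real.logb 2 (1 - p)

/-!
Write `p_l(y) = 1/(1 + e^{l/y})`, so that `c_x = C(λ(x))` with `C(l) = ∫₀¹ h(p_l(y)) dy` and `λ` the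
inverse of `F(l) = ∫₀¹ p_l(y)/y dy`. For `y > 0`, `p_l(y) ∈ (0, 1/2]` decreases strictly in `l`, and
`h` increases on `[0, 1/2]`; hence `C` is strictly decreasing on `l ≥ 0`, and `F` is decreasing, so
`λ` is strictly decreasing with `λ → ∞` as `x → 0⁺` and `λ → 0` as `x → ∞`. Since `0 ≤ h ≤ 1`,
dominated convergence makes `C` continuous with `C(0) = h(1/2) = 1` and `C(l) → h(0) = 0`.
-/

open MeasureTheory Real Set Topology

lemma binEnt_eq_binEntropy_div_log_two (p : ℝ) : binEnt p = binEntropy p / log 2 := by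
  unfold binEnt binEntropy logb
  rw [log_inv, log_inv]
  ring

lemma continuous_binEnt : Continuous binEnt := by
  simpa only [← binEnt_eq_binEntropy_div_log_two] using binEntropy_continuous.div_const (log 2)

lemma binEnt_zero : binEnt 0 = 0 := by simp [binEnt]

lemma binEnt_two_inv : binEnt 2⁻¹ = 1 := by
  rw [binEnt_eq_binEntropy_div_log_two, binEntropy_two_inv, div_self (log_pos one_lt_two).ne']

lemma binEnt_nonneg {p : ℝ} (hp₀ : 0 ≤ p) (hp₁ : p ≤ 1) : 0 ≤ binEnt p := by
  rw [binEnt_eq_binEntropy_div_log_two]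
  exact div_nonneg (binEntropy_nonneg hp₀ hp₁) (log_nonneg one_le_two)

lemma binEnt_le_one (p : ℝ) : binEnt p ≤ 1 := by
  rw [binEnt_eq_binEntropy_div_log_two, div_le_one (log_pos one_lt_two)]
  exact binEntropy_le_log_two

lemma binEnt_strictMonoOn : StrictMonoOn binEnt (Icc 0 2⁻¹) := fun p hp q hq hpq => by
  simp only [binEnt_eq_binEntropy_div_log_two]
  exact div_lt_div_of_pos_right (binEntropy_strictMonoOn hp hq hpq) (log_pos one_lt_two)

noncomputable def fermi (l y : ℝ) : ℝ := 1 / (1 + exp (l / y))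

lemma fermi_mem_Icc (l y : ℝ) : fermi l y ∈ Icc 0 1 := by
  have := exp_pos (l / y)
  refine ⟨by unfold fermi; positivity, ?_⟩
  rw [fermi, div_le_one (by positivity)]
  linarith

lemma fermi_le_two_inv {l y : ℝ} (hl : 0 ≤ l) (hy : 0 ≤ y) : fermi l y ≤ 2⁻¹ := by
  have := one_le_exp (div_nonneg hl hy)
  rw [fermi, one_div]
  exact inv_anti₀ two_pos (by linarith)

lemma fermi_zero_left (y : ℝ) : fermi 0 y = 2⁻¹ := by
  norm_num [fermi]

lemma fermi_strictAnti {y : ℝ} (hy : 0 < y) : StrictAnti fun l => fermi l y := by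
  intro l₁ l₂ hl
  have := exp_lt_exp.2 (div_lt_div_of_pos_right hl hy)
  simp only [fermi, one_div]
  exact inv_strictAnti₀ (by positivity) (by linarith)

lemma continuous_fermi_left (y : ℝ) : Continuous fun l => fermi l y :=
  continuous_const.div (by fun_prop) fun l => (add_pos one_pos (exp_pos (l / y))).ne'

lemma tendsto_fermi_atTop {y : ℝ} (hy : 0 < y) : Tendsto (fun l => fermi l y) atTop (𝓝 0) := by
  have h := tendsto_atTop_add_const_left _ 1 (tendsto_exp_atTop.comp (tendsto_id.atTop_div_const hy))
  simpa [fermi, Function.comp_def, Pi.inv_def] using h.inv_tendsto_atTop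

lemma measurable_fermi_right (l : ℝ) : Measurable fun y => fermi l y := by
  unfold fermi
  fun_prop

noncomputable def fermiEntropy (l : ℝ) : ℝ := ∫ y in (0:ℝ)..1, binEnt (fermi l y)

lemma norm_binEnt_fermi_le_one (l y : ℝ) : ‖binEnt (fermi l y)‖ ≤ 1 := by
  obtain ⟨h₀, h₁⟩ := fermi_mem_Icc l y
  rw [norm_of_nonneg (binEnt_nonneg h₀ h₁)]
  exact binEnt_le_one _

lemma aestronglyMeasurable_binEnt_fermi (l : ℝ) (μ : Measure ℝ) :
    AEStronglyMeasurable (fun y => binEnt (fermi l y)) μ :=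
  (continuous_binEnt.measurable.comp (measurable_fermi_right l)).aestronglyMeasurable

lemma intervalIntegrable_binEnt_fermi (l : ℝ) :
    IntervalIntegrable (fun y => binEnt (fermi l y)) volume 0 1 :=
  intervalIntegrable_const.mono_fun' (aestronglyMeasurable_binEnt_fermi l _)
    (ae_of_all _ fun y => norm_binEnt_fermi_le_one l y)

lemma continuous_fermiEntropy : Continuous fermiEntropy :=
  intervalIntegral.continuous_of_dominated_interval (bound := fun _ => 1)
    (fun l => aestronglyMeasurable_binEnt_fermi l _)
    (fun l => ae_of_all _ fun y _ => norm_binEnt_fermi_le_one l y) intervalIntegrable_const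
    (ae_of_all _ fun y _ => continuous_binEnt.comp (continuous_fermi_left y))

lemma fermiEntropy_zero : fermiEntropy 0 = 1 := by
  simp [fermiEntropy, fermi_zero_left, binEnt_two_inv]

lemma tendsto_fermiEntropy_atTop : Tendsto fermiEntropy atTop (𝓝 0) := by
  have h := intervalIntegral.tendsto_integral_filter_of_dominated_convergence (μ := volume)
    (a := 0) (b := 1) (F := fun l y => binEnt (fermi l y)) (f := fun _ => 0) (fun _ => 1)
    (Eventually.of_forall fun l => aestronglyMeasurable_binEnt_fermi l _)
    (Eventually.of_forall fun l => ae_of_all _ fun y _ => norm_binEnt_fermi_le_one l y)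
    intervalIntegrable_const
    (ae_of_all _ fun y hy => by
      rw [uIoc_of_le zero_le_one] at hy
      have h₀ := (continuous_binEnt.tendsto 0).comp (tendsto_fermi_atTop hy.1)
      rwa [binEnt_zero] at h₀)
  rwa [intervalIntegral.integral_zero] at h

lemma fermiEntropy_strictAntiOn : StrictAntiOn fermiEntropy (Ici 0) := by
  intro l₁ hl₁ l₂ hl₂ hl
  have hpos : 0 < ∫ y in (0:ℝ)..1, (binEnt (fermi l₁ y) - binEnt (fermi l₂ y)) := by
    refine intervalIntegral.intervalIntegral_pos_of_pos_on
      ((intervalIntegrable_binEnt_fermi l₁).sub (intervalIntegrable_binEnt_fermi l₂))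
      (fun y hy => sub_pos.2 ?_) zero_lt_one
    exact binEnt_strictMonoOn ⟨(fermi_mem_Icc _ _).1, fermi_le_two_inv hl₂ hy.1.le⟩
      ⟨(fermi_mem_Icc _ _).1, fermi_le_two_inv hl₁ hy.1.le⟩ (fermi_strictAnti hy.1 hl)
  rw [intervalIntegral.integral_sub (intervalIntegrable_binEnt_fermi l₁)
    (intervalIntegrable_binEnt_fermi l₂)] at hpos
  exact sub_pos.1 hpos

noncomputable def fermiInvMoment (l : ℝ) : ℝ := ∫ y in (0:ℝ)..1, 1 / (y * (1 + exp (l / y)))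

lemma one_div_mul_one_add_exp_pos (l : ℝ) {y : ℝ} (hy : 0 < y) :
    0 < 1 / (y * (1 + exp (l / y))) := by
  have := exp_pos (l / y)
  positivity

lemma one_div_mul_one_add_exp_le {l y : ℝ} (hl : 0 < l) (hy : 0 < y) :
    1 / (y * (1 + exp (l / y))) ≤ 1 / l := by
  refine one_div_le_one_div_of_le hl ?_
  calc l = y * (l / y) := by field_simp
    _ ≤ y * (1 + exp (l / y)) := by gcongr; linarith [add_one_le_exp (l / y)]

lemma one_div_mul_one_add_exp_anti {l₁ l₂ y : ℝ} (hl : l₁ ≤ l₂) (hy : 0 < y) :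
    1 / (y * (1 + exp (l₂ / y))) ≤ 1 / (y * (1 + exp (l₁ / y))) := by
  have := exp_pos (l₁ / y)
  gcongr

lemma intervalIntegrable_one_div_mul_one_add_exp {l : ℝ} (hl : 0 < l) :
    IntervalIntegrable (fun y => 1 / (y * (1 + exp (l / y)))) volume 0 1 := by
  refine (intervalIntegrable_const (c := 1 / l)).mono_fun'
    (Measurable.aestronglyMeasurable (by fun_prop)) ?_
  rw [EventuallyLE, ae_restrict_iff' measurableSet_uIoc, uIoc_of_le zero_le_one]
  refine ae_of_all _ fun y hy => ?_
  rw [norm_of_nonneg (one_div_mul_one_add_exp_pos l hy.1).le]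
  exact one_div_mul_one_add_exp_le hl hy.1

lemma fermiInvMoment_pos {l : ℝ} (hl : 0 < l) : 0 < fermiInvMoment l :=
  intervalIntegral.intervalIntegral_pos_of_pos_on (intervalIntegrable_one_div_mul_one_add_exp hl)
    (fun _ hy => one_div_mul_one_add_exp_pos l hy.1) zero_lt_one

lemma fermiInvMoment_antitoneOn : AntitoneOn fermiInvMoment (Ioi 0) := fun _ hl₁ _ hl₂ hl =>
  intervalIntegral.integral_mono_on_of_le_Ioo zero_le_one
    (intervalIntegrable_one_div_mul_one_add_exp hl₂) (intervalIntegrable_one_div_mul_one_add_exp hl₁)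
    fun _ hy => one_div_mul_one_add_exp_anti hl hy.1

section RightInverse

variable {F lam : ℝ → ℝ}

lemma AntitoneOn.strictAntiOn_of_rightInv (hF : AntitoneOn F (Ioi 0))
    (hlam : ∀ x, 0 < x → 0 < lam x ∧ F (lam x) = x) : StrictAntiOn lam (Ioi 0) := by
  intro x₁ hx₁ x₂ hx₂ hx
  by_contra! hle
  have h := hF (hlam x₁ hx₁).1 (hlam x₂ hx₂).1 hle
  rw [(hlam x₁ hx₁).2, (hlam x₂ hx₂).2] at h
  exact h.not_gt hx

lemma AntitoneOn.tendsto_rightInv_nhdsGT_zero (hF : AntitoneOn F (Ioi 0))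
    (hF_pos : ∀ l, 0 < l → 0 < F l) (hlam : ∀ x, 0 < x → 0 < lam x ∧ F (lam x) = x) :
    Tendsto lam (𝓝[>] 0) atTop := by
  refine tendsto_atTop.2 fun M => ?_
  have hM : 0 < max M 1 := one_pos.trans_le (le_max_right M 1)
  filter_upwards [Ioo_mem_nhdsGT (hF_pos _ hM)] with x hx
  by_contra! hlt
  have h := hF (hlam x hx.1).1 hM (hlt.le.trans (le_max_left M 1))
  rw [(hlam x hx.1).2] at h
  exact h.not_gt hx.2

lemma AntitoneOn.tendsto_rightInv_atTop (hF : AntitoneOn F (Ioi 0))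
    (hlam : ∀ x, 0 < x → 0 < lam x ∧ F (lam x) = x) : Tendsto lam atTop (𝓝 0) := by
  refine tendsto_order.2 ⟨fun a ha => ?_, fun a ha => ?_⟩
  · filter_upwards [eventually_gt_atTop 0] with x hx using ha.trans (hlam x hx).1
  · filter_upwards [eventually_gt_atTop (max (F a) 0)] with x hx
    have hx₀ : 0 < x := (le_max_right _ _).trans_lt hx
    by_contra! hle
    have h := hF ha (hlam x hx₀).1 hle
    rw [(hlam x hx₀).2] at h
    exact h.not_gt ((le_max_left _ _).trans_lt hx)

end RightInverse

/-- If `lam x` is, for each `x > 0`, the (unique) positive solution of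
`∫₀¹ 1/(y(1+e^{λ/y})) dy = x`, then `x ↦ c_x = ∫₀¹ h(1/(1+e^{lam x / y})) dy`
is strictly increasing on `(0,∞)`, tends to `0` as `x → 0⁺`, and tends to `1`
as `x → ∞`. -/
theorem c_x_strictMono_and_limits (lam : ℝ → ℝ)
    (hlam : ∀ x : ℝ, 0 < x → 0 < lam x ∧
      (∫ y in (0:ℝ)..1, 1 / (y * (1 + Real.exp (lam x / y)))) = x) :
    StrictMonoOn (fun x : ℝ => ∫ y in (0:ℝ)..1, binEnt (1 / (1 + Real.exp (lam x / y))))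
      (Set.Ioi 0) ∧
    Tendsto (fun x : ℝ => ∫ y in (0:ℝ)..1, binEnt (1 / (1 + Real.exp (lam x / y))))
      (nhdsWithin 0 (Set.Ioi 0)) (nhds 0) ∧
    Tendsto (fun x : ℝ => ∫ y in (0:ℝ)..1, binEnt (1 / (1 + Real.exp (lam x / y))))
      atTop (nhds 1) := by
  have hF := fermiInvMoment_antitoneOn
  refine ⟨fermiEntropy_strictAntiOn.comp (hF.strictAntiOn_of_rightInv hlam)
    fun x hx => (hlam x hx).1.le, ?_, ?_⟩
  · exact tendsto_fermiEntropy_atTop.comp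
      (hF.tendsto_rightInv_nhdsGT_zero (fun _ => fermiInvMoment_pos) hlam)
  · have h := (continuous_fermiEntropy.tendsto 0).comp (hF.tendsto_rightInv_atTop hlam)
    rwa [fermiEntropy_zero] at h
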